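/- Combining the CDF approximation bound with the empirical quantile property: under assumptions (i)–(iii) of the previous statement, the conformal prediction interval built from the left empirical (1−α)-quantile q of F̃ over m calibration scores satisfies |P(y* ∈ C(1−α)) − (1 − α)| ≤ 3ε + 4Lδ + 1/m. -/

import Mathlib

open MeasureTheory Finset Filter Topology

/-!
Scores within `δ` of each other pointwise shift their CDFs by at most `δ`: each CDF (empirical
or true) of the fitted scores lies between the corresponding CDF of the reference scores at
`x - δ` and at `x + δ`. Chaining this with the `ε`-approximation of the reference CDF by its
empirical version and the `L`-Lipschitz bound on the reference CDF, the true CDF of the fitted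
scores at `q` lies between the fitted empirical CDF at `q + t` and at `q - t`, up to
`ε + L (2δ + t)`, for every `t > 0`. By definition of the left quantile the fitted empirical
CDF is `≥ 1 - α` at `q + t` and `< 1 - α` at `q - t`; letting `t → 0` gives the bound.
-/

noncomputable def empiricalCDF {ι : Type*} [Fintype ι] (s : ι → ℝ) (x : ℝ) : ℝ :=
  #{i | s i ≤ x} / Fintype.card ι

section empiricalCDF

variable {ι : Type*} [Fintype ι]

theorem empiricalCDF_le_empiricalCDF {s r : ι → ℝ} {x y : ℝ} (h : ∀ i, s i ≤ x → r i ≤ y) :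
    empiricalCDF s x ≤ empiricalCDF r y := by
  unfold empiricalCDF
  gcongr ?_ / _
  exact_mod_cast card_le_card (monotone_filter_right _ fun i _ => h i)

theorem empiricalCDF_mono (s : ι → ℝ) : Monotone (empiricalCDF s) :=
  fun _ _ hxy => empiricalCDF_le_empiricalCDF fun _ hi => hi.trans hxy

theorem empiricalCDF_sub_le_and_le_add {s r : ι → ℝ} {δ : ℝ} (h : ∀ i, |s i - r i| ≤ δ)
    (x : ℝ) : empiricalCDF r (x - δ) ≤ empiricalCDF s x ∧ empiricalCDF s x ≤ empiricalCDF r (x + δ) :=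
  ⟨empiricalCDF_le_empiricalCDF fun i hi => by linarith [(abs_le.1 (h i)).2],
    empiricalCDF_le_empiricalCDF fun i hi => by linarith [(abs_le.1 (h i)).1]⟩

theorem empiricalCDF_eq_zero {s : ι → ℝ} {x : ℝ} (h : ∀ i, x < s i) : empiricalCDF s x = 0 := by
  simp [empiricalCDF, filter_false_of_mem fun i _ => not_le.2 (h i)]

theorem empiricalCDF_eq_one [Nonempty ι] {s : ι → ℝ} {x : ℝ} (h : ∀ i, s i ≤ x) :
    empiricalCDF s x = 1 := by
  simp [empiricalCDF, filter_true_of_mem fun i _ => h i]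

theorem nonempty_setOf_le_empiricalCDF [Nonempty ι] (s : ι → ℝ) {c : ℝ} (hc : c ≤ 1) :
    {x | c ≤ empiricalCDF s x}.Nonempty := by
  obtain ⟨b, hb⟩ := (Set.finite_range s).bddAbove
  exact ⟨b, by simpa [empiricalCDF_eq_one fun i => hb ⟨i, rfl⟩] using hc⟩

theorem bddBelow_setOf_le_empiricalCDF (s : ι → ℝ) {c : ℝ} (hc : 0 < c) :
    BddBelow {x | c ≤ empiricalCDF s x} := by
  obtain ⟨b, hb⟩ := (Set.finite_range s).bddBelow
  refine ⟨b, fun x hx => not_lt.1 fun hxb => ?_⟩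
  have : empiricalCDF s x = 0 := empiricalCDF_eq_zero fun i => hxb.trans_le (hb ⟨i, rfl⟩)
  exact hc.not_ge (this ▸ hx)

theorem empiricalCDF_lt_and_le_of_eq_sInf [Nonempty ι] (s : ι → ℝ) {c q : ℝ}
    (hc : c ∈ Set.Ioc 0 1) (hq : q = sInf {x | c ≤ empiricalCDF s x}) ⦃t : ℝ⦄ (ht : 0 < t) :
    empiricalCDF s (q - t) < c ∧ c ≤ empiricalCDF s (q + t) := by
  subst hq
  constructor
  · exact not_le.1 fun h =>
      notMem_of_lt_csInf (by linarith) (bddBelow_setOf_le_empiricalCDF s hc.1) h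
  · obtain ⟨y, hy, hyq⟩ := exists_lt_of_csInf_lt (nonempty_setOf_le_empiricalCDF s hc.2)
      (lt_add_of_pos_right _ ht)
    exact hy.trans (empiricalCDF_mono s hyq.le)

end empiricalCDF

theorem toReal_measure_sub_le_and_le_add {Ω : Type*} [MeasurableSpace Ω] {μ : Measure Ω}
    [IsFiniteMeasure μ] {f g : Ω → ℝ} {δ : ℝ} (h : ∀ᵐ ω ∂μ, |f ω - g ω| ≤ δ) (x : ℝ) :
    (μ {ω | g ω ≤ x - δ}).toReal ≤ (μ {ω | f ω ≤ x}).toReal ∧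
      (μ {ω | f ω ≤ x}).toReal ≤ (μ {ω | g ω ≤ x + δ}).toReal := by
  constructor <;> refine ENNReal.toReal_mono (measure_ne_top _ _) (measure_mono_ae ?_)
  · filter_upwards [h] with ω hω (hx : g ω ≤ x - δ) using show f ω ≤ x by linarith [abs_le.1 hω]
  · filter_upwards [h] with ω hω (hx : f ω ≤ x) using show g ω ≤ x + δ by linarith [abs_le.1 hω]

theorem le_of_forall_pos_le_add_mul {a b L : ℝ} (h : ∀ t > 0, a ≤ b + L * t) : a ≤ b := by
  have hlim : Tendsto (fun t => b + L * t) (𝓝[>] 0) (𝓝 b) := by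
    have : Continuous fun t : ℝ => b + L * t := by fun_prop
    simpa using (this.tendsto 0).mono_left nhdsWithin_le_nhds
  exact ge_of_tendsto hlim (eventually_nhdsWithin_of_forall h)

theorem sub_le_mul_sub_of_forall_add_sub_sub_le {G : ℝ → ℝ} {L : ℝ}
    (hLip : ∀ x u : ℝ, 0 ≤ u → G (x + u) - G (x - u) ≤ 2 * L * u) {a b : ℝ} (hab : a ≤ b) :
    G b - G a ≤ L * (b - a) := by
  have := hLip ((a + b) / 2) ((b - a) / 2) (by linarith)
  rw [show (a + b) / 2 + (b - a) / 2 = b by ring, show (a + b) / 2 - (b - a) / 2 = a by ring]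
    at this
  linarith

theorem sub_le_and_le_add_of_shift_of_approx {F Ftil G Gtil : ℝ → ℝ} {ε L δ : ℝ} (hδ : 0 ≤ δ)
    (hFG : ∀ x, G (x - δ) ≤ F x ∧ F x ≤ G (x + δ))
    (hFGtil : ∀ x, Gtil (x - δ) ≤ Ftil x ∧ Ftil x ≤ Gtil (x + δ))
    (happrox : ∀ x, |Gtil x - G x| ≤ ε)
    (hLip : ∀ x u : ℝ, 0 ≤ u → G (x + u) - G (x - u) ≤ 2 * L * u) (x t : ℝ) (ht : 0 ≤ t) :
    Ftil (x + t) - ε - L * (2 * δ + t) ≤ F x ∧ F x ≤ Ftil (x - t) + ε + L * (2 * δ + t) := by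
  have hGup := sub_le_mul_sub_of_forall_add_sub_sub_le hLip
    (show x - δ ≤ x + t + δ by linarith)
  have hGdown := sub_le_mul_sub_of_forall_add_sub_sub_le hLip
    (show x - t - δ ≤ x + δ by linarith)
  constructor
  · calc Ftil (x + t) - ε - L * (2 * δ + t)
        ≤ Gtil (x + t + δ) - ε - L * (2 * δ + t) := by linarith [(hFGtil (x + t)).2]
      _ ≤ G (x + t + δ) - L * (2 * δ + t) := by linarith [(abs_le.1 (happrox (x + t + δ))).2]
      _ ≤ G (x - δ) := by linarith
      _ ≤ F x := (hFG x).1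
  · calc F x ≤ G (x + δ) := (hFG x).2
      _ ≤ G (x - t - δ) + L * (2 * δ + t) := by linarith
      _ ≤ Gtil (x - t - δ) + ε + L * (2 * δ + t) := by
        linarith [(abs_le.1 (happrox (x - t - δ))).1]
      _ ≤ Ftil (x - t) + ε + L * (2 * δ + t) := by linarith [(hFGtil (x - t)).1]

theorem stmt_6_general {Ω : Type*} [MeasurableSpace Ω] (μ : Measure Ω) [IsProbabilityMeasure μ]
    (m : ℕ) (hm : 0 < m) (s r : Fin m → ℝ) (sStar rStar : Ω → ℝ)
    (α ε L δ : ℝ) (hα : α ∈ Set.Ioo (0:ℝ) 1) (hε : 0 ≤ ε) (hL : 0 ≤ L) (hδ : 0 ≤ δ)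
    (Ftil Gtil F G : ℝ → ℝ)
    (hFtil : ∀ x, Ftil x = ((Finset.univ.filter (fun j => s j ≤ x)).card : ℝ) / m)
    (hGtil : ∀ x, Gtil x = ((Finset.univ.filter (fun j => r j ≤ x)).card : ℝ) / m)
    (hF : ∀ x, F x = (μ {ω | sStar ω ≤ x}).toReal)
    (hG : ∀ x, G x = (μ {ω | rStar ω ≤ x}).toReal)
    (hclose_cal : ∀ j, |s j - r j| ≤ δ)
    (hclose_test : ∀ᵐ ω ∂μ, |sStar ω - rStar ω| ≤ δ)
    (happrox : ∀ x, |Gtil x - G x| ≤ ε)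
    (hLip : ∀ x u : ℝ, 0 ≤ u → G (x + u) - G (x - u) ≤ 2 * L * u)
    (q : ℝ) (hq : q = sInf {x : ℝ | 1 - α ≤ Ftil x}) :
    |(μ {ω | sStar ω ≤ q}).toReal - (1 - α)| ≤ 3 * ε + 4 * L * δ + 1 / m := by
  have : Nonempty (Fin m) := ⟨⟨0, hm⟩⟩
  obtain rfl : Ftil = empiricalCDF s := funext fun x => by
    rw [hFtil, empiricalCDF, Fintype.card_fin]
  obtain rfl : Gtil = empiricalCDF r := funext fun x => by
    rw [hGtil, empiricalCDF, Fintype.card_fin]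
  have hFG x : G (x - δ) ≤ F x ∧ F x ≤ G (x + δ) := by
    simpa only [hF, hG] using toReal_measure_sub_le_and_le_add hclose_test x
  have hcomp := sub_le_and_le_add_of_shift_of_approx hδ hFG
    (empiricalCDF_sub_le_and_le_add hclose_cal) happrox hLip q
  have hquant := empiricalCDF_lt_and_le_of_eq_sInf s
    ⟨by linarith [hα.2], by linarith [hα.1]⟩ hq
  have hupper : F q ≤ 1 - α + ε + 2 * L * δ := le_of_forall_pos_le_add_mul (L := L) fun t ht => by
    linarith [(hcomp t ht.le).2, (hquant ht).1]
  have hlower : 1 - α - ε - 2 * L * δ ≤ F q := le_of_forall_pos_le_add_mul (L := L) fun t ht => by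
    linarith [(hcomp t ht.le).1, (hquant ht).2]
  have : 0 ≤ L * δ := mul_nonneg hL hδ
  have : 0 ≤ 1 / (m : ℝ) := by positivity
  rw [← hF, abs_le]
  constructor <;> linarith

/-- Under assumptions (i)-(iii) of Statement 5, the conformal prediction
interval built from the left empirical `(1-α)`-quantile `q` of `F̃` over `m` calibration
scores satisfies `|P(y* ∈ C(1-α)) - (1-α)| ≤ 3ε + 4Lδ + 1/m`, where the coverage event
equals `{s* ≤ q}`. -/
theorem stmt_6 {Ω : Type*} [MeasurableSpace Ω] (μ : Measure Ω) [IsProbabilityMeasure μ]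
    (m : ℕ) (hm : 0 < m) (s r : Fin m → ℝ) (sStar rStar : Ω → ℝ)
    (α ε L δ : ℝ) (hα : α ∈ Set.Ioo (0:ℝ) 1) (hε : 0 ≤ ε) (hL : 0 ≤ L) (hδ : 0 ≤ δ)
    (Ftil Gtil F G : ℝ → ℝ)
    (hFtil : ∀ x, Ftil x = ((Finset.univ.filter (fun j => s j ≤ x)).card : ℝ) / m)
    (hGtil : ∀ x, Gtil x = ((Finset.univ.filter (fun j => r j ≤ x)).card : ℝ) / m)
    (hF : ∀ x, F x = (μ {ω | sStar ω ≤ x}).toReal)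
    (hG : ∀ x, G x = (μ {ω | rStar ω ≤ x}).toReal)
    (hmeas_s : Measurable sStar) (hmeas_r : Measurable rStar)
    (hclose_cal : ∀ j, |s j - r j| ≤ δ)
    (hclose_test : ∀ᵐ ω ∂μ, |sStar ω - rStar ω| ≤ δ)
    (happrox : ∀ x, |Gtil x - G x| ≤ ε)
    (hLip : ∀ x u : ℝ, 0 ≤ u → G (x + u) - G (x - u) ≤ 2 * L * u)
    (q : ℝ) (hq : q = sInf {x : ℝ | 1 - α ≤ Ftil x}) :
    |(μ {ω | sStar ω ≤ q}).toReal - (1 - α)| ≤ 3 * ε + 4 * L * δ + 1 / m :=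
  stmt_6_general μ m hm s r sStar rStar α ε L δ hα hε hL hδ Ftil Gtil F G hFtil hGtil hF hG
    hclose_cal hclose_test happrox hLip q hq
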